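/- The five PYRAMID vectors ψ_j = v_j ⊗ v_{2j mod 5}, j = 0,…,4, with v_j = N(cos(2πj/5), sin(2πj/5), h), h = (1/2)√(1+√5), N = 2/√(5+√5), form an orthonormal set in ℂ³ ⊗ ℂ³. -/

import Mathlib

/-!
Each `v_j` is a unit vector, and `⟨v_j, v_k⟩` is proportional to `cos (2π (j - k) / 5) + h²`,
which vanishes for `j - k ≡ ±2 (mod 5)` since `h² = (1 + √5) / 4 = -cos (4π / 5)`.
The inner product of `ψ_i` and `ψ_j` is `⟨v_i, v_j⟩ ⟨v_{2i}, v_{2j}⟩`, and for `i ≠ j` one of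
`i - j`, `2i - 2j` is `≡ ±2 (mod 5)`, because doubling maps `±1` to `±2`.
-/

open Matrix ComplexOrder

noncomputable def pyr (j : Fin 5) : Fin 3 → ℂ :=
  (↑(2 / Real.sqrt (5 + Real.sqrt 5)) : ℂ) •
    ![(Real.cos (2 * Real.pi * (j : ℕ) / 5) : ℂ),
      (Real.sin (2 * Real.pi * (j : ℕ) / 5) : ℂ),
      ((1 / 2) * Real.sqrt (1 + Real.sqrt 5) : ℂ)]

noncomputable def pyramid (j : Fin 5) : Fin 3 × Fin 3 → ℂ :=
  fun p => pyr j p.1 * pyr (2 * j) p.2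

open Real

theorem sum_conj_mul_tensor {R ι κ : Type*} [CommSemiring R] [StarRing R] [Fintype ι]
    [Fintype κ] (u u' : ι → R) (v v' : κ → R) :
    ∑ p : ι × κ, starRingEnd R (u p.1 * v p.2) * (u' p.1 * v' p.2) =
      (∑ i, starRingEnd R (u i) * u' i) * ∑ k, starRingEnd R (v k) * v' k := by
  rw [Fintype.sum_prod_type, Finset.sum_mul_sum]
  exact Finset.sum_congr rfl fun _ _ => Finset.sum_congr rfl fun _ _ => by rw [map_mul]; ring

theorem cos_two_pi_mul_div_five_of_emod_eq_two {k : ℤ} (hk : k % 5 = 2) :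
    cos (2 * π * k / 5) = -((1 + √5) / 4) := by
  have hk' : (k : ℝ) = 2 + (k / 5 : ℤ) * 5 := by
    exact_mod_cast (by omega : k = 2 + k / 5 * 5)
  rw [hk', show 2 * π * (2 + (k / 5 : ℤ) * 5) / 5 = π - π / 5 + (k / 5 : ℤ) * (2 * π) by ring,
    cos_add_int_mul_two_pi, cos_pi_sub, cos_pi_div_five]

theorem cos_two_pi_mul_div_five_of_emod_eq_two_or_three {k : ℤ} (hk : k % 5 = 2 ∨ k % 5 = 3) :
    cos (2 * π * k / 5) = -((1 + √5) / 4) := by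
  rcases hk with hk | hk
  · exact cos_two_pi_mul_div_five_of_emod_eq_two hk
  · rw [← cos_neg, ← cos_two_pi_mul_div_five_of_emod_eq_two (k := -k) (by omega)]
    congr 1
    push_cast
    ring

theorem pyr_inner (a b : Fin 5) :
    ∑ x, starRingEnd ℂ (pyr a x) * pyr b x =
      ((4 / (5 + √5) * (cos (2 * π * ((a - b : ℤ) : ℝ) / 5) + (1 + √5) / 4) : ℝ) : ℂ) := by
  have h5 : 0 < 5 + √5 := by positivity
  have hN : √(5 + √5) ^ 2 = 5 + √5 := sq_sqrt h5.le
  have hh : √(1 + √5) ^ 2 = 1 + √5 := sq_sqrt (by positivity)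
  rw [show 2 * π * (((a : ℤ) - b : ℤ) : ℝ) / 5 = 2 * π * a / 5 - 2 * π * b / 5 by push_cast; ring,
    cos_sub]
  simp only [pyr, Fin.sum_univ_three, Pi.smul_apply, smul_eq_mul, cons_val_zero, cons_val_one,
    cons_val_two, head_cons, tail_cons, map_mul, Complex.conj_ofReal, ← Complex.ofReal_ofNat,
    ← Complex.ofReal_one, ← Complex.ofReal_div, ← Complex.ofReal_mul, ← Complex.ofReal_add,
    Complex.ofReal_inj]
  field_simp
  rw [hN, hh]
  ring

theorem pyr_inner_self (a : Fin 5) : ∑ x, starRingEnd ℂ (pyr a x) * pyr a x = 1 := by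
  have h5 : 5 + √5 ≠ 0 := by positivity
  rw [pyr_inner, sub_self, Int.cast_zero, mul_zero, zero_div, cos_zero, Complex.ofReal_eq_one]
  field_simp
  ring

theorem pyr_inner_eq_zero {a b : Fin 5} (h : a - b = 2 ∨ a - b = 3) :
    ∑ x, starRingEnd ℂ (pyr a x) * pyr b x = 0 := by
  have hk : (a - b : ℤ) % 5 = 2 ∨ (a - b : ℤ) % 5 = 3 := by
    simp only [Fin.ext_iff, Fin.val_sub] at h
    omega
  rw [pyr_inner, cos_two_pi_mul_div_five_of_emod_eq_two_or_three hk, neg_add_cancel, mul_zero,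
    Complex.ofReal_zero]

theorem sub_or_two_mul_sub_eq_two_or_three {i j : Fin 5} (h : i ≠ j) :
    (i - j = 2 ∨ i - j = 3) ∨ (2 * i - 2 * j = 2 ∨ 2 * i - 2 * j = 3) := by
  revert i j
  decide

/-- The PYRAMID vectors form an orthonormal set. -/
theorem pyramid_orthonormal :
    ∀ i j : Fin 5,
      (∑ p : Fin 3 × Fin 3, (starRingEnd ℂ) (pyramid i p) * pyramid j p) =
        if i = j then 1 else 0 := by
  intro i j
  simp only [pyramid, sum_conj_mul_tensor]
  split_ifs with h
  · rw [h, pyr_inner_self, pyr_inner_self, one_mul]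
  · rcases sub_or_two_mul_sub_eq_two_or_three h with h | h
    · rw [pyr_inner_eq_zero h, zero_mul]
    · rw [pyr_inner_eq_zero h, mul_zero]
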